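/- arXiv:1603.00161 — 2 statements merged into one kernel-verified Lean document; each statement's English description precedes it below -/
import Mathlib

section
/- Let q be a power of an odd prime, let d ∈ 𝔽_q[T] be square-free and non-constant, and let p ∈ 𝔽_q[T] be an irreducible polynomial not dividing d. Then the ideal (p) of A = 𝔽_q[T] is generated by an element of the form x² − d·y² with x, y ∈ A if and only if the ideal p·B_K of B_K factors as a product 𝔭·𝔭' of two distinct prime ideals of B_K, with 𝔭 a principal ideal. -/
/-!
Identify `B_K` with `A[√d] = QuadraticAlgebra A d 0`: for `b ≠ 0` the minimal polynomial of
`a + b√d` over `F` is `X² - 2aX + (a² - db²)`; if the element is integral, this polynomial has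
coefficients in the integrally closed `A`, and as `2` is a unit and `d` is squarefree, `a, b ∈ A`.

In `A[√d]`, if `p` is associated to `N(z) = z z̄` with `z = x + y√d`, then `p ∤ y`, so `√d` is
congruent modulo `z` to an element of `A`; hence `A / (p) ≅ A[√d] / (z)`, and `(z)`, `(z̄)` are
distinct maximal ideals (as `p ∤ 2x`) with product `(p)`. Conversely, if `(p) = (α) 𝔭'`, then
`p = αγ` and taking norms shows `N(α) ~ p` unless `γ` is a unit, in which case `(α) = (p) ≤ 𝔭'`.
-/

open Polynomial

theorem Ideal.isMaximal_of_surjective_of_isMaximal_comap {R S : Type*} [CommRing R] [CommRing S]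
    [Algebra R S] {I : Ideal S}
    (hsurj : Function.Surjective ((Ideal.Quotient.mk I).comp (algebraMap R S)))
    (hI : (I.comap (algebraMap R S)).IsMaximal) : I.IsMaximal := by
  have hker : RingHom.ker ((Ideal.Quotient.mk I).comp (algebraMap R S)) =
      I.comap (algebraMap R S) := by
    rw [← RingHom.comap_ker, Ideal.mk_ker]
  rw [← hker, Ideal.Quotient.maximal_ideal_iff_isField_quotient] at hI
  exact Ideal.Quotient.maximal_of_isField I
    (MulEquiv.isField hI (RingHom.quotientKerEquivOfSurjective hsurj).symm.toMulEquiv)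

theorem Ideal.comap_eq_span_of_algebraMap_mem {R S : Type*} [CommRing R] [CommRing S]
    [Algebra R S] {p : R} (hp : (Ideal.span {p}).IsMaximal) {J : Ideal S} (hJ : J ≠ ⊤)
    (hpJ : algebraMap R S p ∈ J) : J.comap (algebraMap R S) = Ideal.span {p} :=
  (hp.eq_of_le (Ideal.comap_ne_top _ hJ) (Ideal.span_le.mpr (by simpa using hpJ))).symm

def SplitsWithPrincipalFactor {R : Type*} (S : Type*) [CommRing R] [CommRing S] [Algebra R S]
    (p : R) : Prop :=
  ∃ 𝔭 𝔭' : Ideal S, 𝔭.IsPrime ∧ 𝔭'.IsPrime ∧ 𝔭 ≠ 𝔭' ∧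
    Ideal.span {algebraMap R S p} = 𝔭 * 𝔭' ∧ Submodule.IsPrincipal 𝔭

theorem SplitsWithPrincipalFactor.of_algEquiv {R S S' : Type*} [CommRing R] [CommRing S]
    [CommRing S'] [Algebra R S] [Algebra R S'] (e : S ≃ₐ[R] S') {p : R}
    (h : SplitsWithPrincipalFactor S p) : SplitsWithPrincipalFactor S' p := by
  obtain ⟨𝔭, 𝔭', h𝔭, h𝔭', hne, hprod, hprinc⟩ := h
  refine ⟨𝔭.map e, 𝔭'.map e, Ideal.map_isPrime_of_equiv e, Ideal.map_isPrime_of_equiv e,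
    fun h ↦ hne ?_, ?_, hprinc.map_ringHom e⟩
  · simpa [Ideal.comap_map_of_bijective _ e.bijective] using congrArg (Ideal.comap e) h
  · rw [← Ideal.map_mul, ← hprod, Ideal.map_span, Set.image_singleton, AlgEquiv.commutes]

theorem AlgEquiv.splitsWithPrincipalFactor_iff {R S S' : Type*} [CommRing R] [CommRing S]
    [CommRing S'] [Algebra R S] [Algebra R S'] (e : S ≃ₐ[R] S') {p : R} :
    SplitsWithPrincipalFactor S p ↔ SplitsWithPrincipalFactor S' p :=
  ⟨.of_algEquiv e, .of_algEquiv e.symm⟩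

namespace QuadraticAlgebra

variable {R : Type*} [CommRing R] {d p : R}

theorem norm_mk_of_zero (x y : R) :
    norm (⟨x, y⟩ : QuadraticAlgebra R d 0) = x ^ 2 - d * y ^ 2 := by
  simp only [norm_def]
  ring

theorem span_algebraMap_eq_span_mul_span_star {z : QuadraticAlgebra R d 0}
    (hz : Associated p z.norm) :
    Ideal.span {algebraMap R _ p} = Ideal.span {z} * Ideal.span {star z} := by
  obtain ⟨u, hu⟩ := hz
  rw [Ideal.span_singleton_mul_span_singleton, ← algebraMap_norm_eq_mul_star, ← hu, map_mul,
    Ideal.span_singleton_mul_right_unit (u.isUnit.map _)]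

theorem algebraMap_mem_span_of_associated_norm {z : QuadraticAlgebra R d 0}
    (hz : Associated p z.norm) : algebraMap R _ p ∈ Ideal.span {z} := by
  obtain ⟨u, hu⟩ := hz
  refine Ideal.mem_span_singleton.mpr ⟨star z * algebraMap R _ ↑u⁻¹, ?_⟩
  rw [← mul_assoc, ← algebraMap_norm_eq_mul_star, ← hu, ← map_mul, mul_assoc, Units.mul_inv,
    mul_one]

theorem not_dvd_re_and_not_dvd_im [IsDomain R] (hp : Prime p) (hpd : ¬ p ∣ d)
    {z : QuadraticAlgebra R d 0} (hz : Associated p z.norm) : ¬ p ∣ z.re ∧ ¬ p ∣ z.im := by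
  obtain ⟨x, y⟩ := z
  rw [norm_mk_of_zero] at hz
  have hN : p ∣ x ^ 2 - d * y ^ 2 := hz.dvd
  have hboth : ¬ (p ∣ x ∧ p ∣ y) := by
    rintro ⟨⟨a, rfl⟩, ⟨b, rfl⟩⟩
    have : p * p ∣ p * 1 := by
      rw [mul_one]
      exact (Dvd.intro (a ^ 2 - d * b ^ 2) (by ring)).trans hz.symm.dvd
    exact hp.not_isUnit (isUnit_of_dvd_one ((mul_dvd_mul_iff_left hp.ne_zero).mp this))
  have hy : ¬ p ∣ y := fun hy ↦ hboth ⟨hp.dvd_of_dvd_pow (n := 2)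
    (by simpa using dvd_add hN ((hy.pow two_ne_zero).mul_left d)), hy⟩
  refine ⟨fun hx ↦ hy (hp.dvd_of_dvd_pow (n := 2) ?_), hy⟩
  refine (hp.dvd_or_dvd ?_).resolve_left hpd
  simpa using dvd_sub (hx.pow two_ne_zero) hN

theorem isMaximal_span_of_associated_norm [IsPrincipalIdealRing R] (hp : Irreducible p)
    {z : QuadraticAlgebra R d 0} (hz : Associated p z.norm) (him : ¬ p ∣ z.im) :
    (Ideal.span {z}).IsMaximal := by
  have hpmax := PrincipalIdealRing.isMaximal_of_irreducible hp
  have hne : Ideal.span {z} ≠ ⊤ := by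
    rw [Ne, Ideal.span_singleton_eq_top, isUnit_iff_norm_isUnit, ← hz.isUnit_iff]
    exact hp.not_isUnit
  have hcomap := Ideal.comap_eq_span_of_algebraMap_mem hpmax hne
    (algebraMap_mem_span_of_associated_norm hz)
  refine Ideal.isMaximal_of_surjective_of_isMaximal_comap ?_ (by rwa [hcomap])
  obtain ⟨c, y', hcy⟩ := hp.coprime_iff_not_dvd.mpr him
  -- modulo `z = x + y ω`, the generator `ω` is congruent to `-y' x`, where `y' y ≡ 1 mod p`
  intro w
  obtain ⟨w, rfl⟩ := Ideal.Quotient.mk_surjective w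
  refine ⟨w.re - w.im * y' * z.re, (Ideal.Quotient.eq.mpr ?_).symm⟩
  have hω : w - algebraMap R _ (w.re - w.im * y' * z.re) =
      z * algebraMap R _ (w.im * y') + algebraMap R _ p * (algebraMap R _ (c * w.im) * ω) := by
    ext
    · simp only [map_sub, map_mul, re_sub, algebraMap_re, re_mul, algebraMap_im, mul_zero,
        add_zero, im_mul, zero_mul, sub_sub_cancel, re_add, omega_re, omega_im, mul_one]
      ring
    · simp only [map_sub, map_mul, im_sub, algebraMap_im, im_mul, re_mul, algebraMap_re, mul_zero,
        add_zero, zero_mul, sub_self, sub_zero, im_add, zero_add, omega_im, mul_one, omega_re]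
      linear_combination (-w.im) * hcy
  rw [hω]
  exact Ideal.add_mem _ (Ideal.mul_mem_right _ _ (Ideal.mem_span_singleton_self z))
    (Ideal.mul_mem_right _ _ (algebraMap_mem_span_of_associated_norm hz))

theorem span_ne_span_star (hp : Prime p) (hp2 : ¬ p ∣ 2) {z : QuadraticAlgebra R d 0}
    (hcomap : (Ideal.span {z}).comap (algebraMap R _) = Ideal.span {p}) (hre : ¬ p ∣ z.re) :
    Ideal.span {z} ≠ Ideal.span {star z} := by
  intro h
  have htrace : algebraMap R _ (trace z) ∈ Ideal.span {z} := by
    rw [algebraMap_trace_eq_add_star]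
    exact Ideal.add_mem _ (Ideal.mem_span_singleton_self z) (h ▸ Ideal.mem_span_singleton_self _)
  rw [← Ideal.mem_comap, hcomap, Ideal.mem_span_singleton, trace_def, zero_mul, add_zero] at htrace
  exact (hp.dvd_or_dvd htrace).elim hp2 hre

theorem splitsWithPrincipalFactor_of_associated_norm [IsDomain R] [IsPrincipalIdealRing R]
    (hp : Irreducible p) (hpd : ¬ p ∣ d) (hp2 : ¬ p ∣ 2) {z : QuadraticAlgebra R d 0}
    (hz : Associated p z.norm) :
    SplitsWithPrincipalFactor (QuadraticAlgebra R d 0) p := by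
  obtain ⟨hre, him⟩ := not_dvd_re_and_not_dvd_im hp.prime hpd hz
  have hmax := isMaximal_span_of_associated_norm hp hz him
  have hmax' : (Ideal.span {star z}).IsMaximal :=
    isMaximal_span_of_associated_norm hp (norm_star z ▸ hz) (by simpa using him)
  have hcomap := Ideal.comap_eq_span_of_algebraMap_mem
    (PrincipalIdealRing.isMaximal_of_irreducible hp) hmax.ne_top
    (algebraMap_mem_span_of_associated_norm hz)
  exact ⟨_, _, hmax.isPrime, hmax'.isPrime, span_ne_span_star hp.prime hp2 hcomap hre,
    span_algebraMap_eq_span_mul_span_star hz, ⟨z, rfl⟩⟩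

theorem exists_associated_norm_of_splitsWithPrincipalFactor [IsDomain R] [IsPrincipalIdealRing R]
    (hp : Irreducible p) (h : SplitsWithPrincipalFactor (QuadraticAlgebra R d 0) p) :
    ∃ z : QuadraticAlgebra R d 0, Associated p z.norm := by
  obtain ⟨𝔭, 𝔭', h𝔭, h𝔭', hne, hprod, α, hα⟩ := h
  rw [Ideal.submodule_span_eq] at hα
  have hp𝔭 : algebraMap R _ p ∈ 𝔭 := Ideal.mul_le_left (hprod ▸ Ideal.mem_span_singleton_self _)
  have hpmax := PrincipalIdealRing.isMaximal_of_irreducible hp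
  have hcomap := Ideal.comap_eq_span_of_algebraMap_mem hpmax h𝔭.ne_top hp𝔭
  have hmax : 𝔭.IsMaximal :=
    Ideal.isMaximal_of_isIntegral_of_isMaximal_comap 𝔭 (by rwa [hcomap])
  obtain ⟨m, hm⟩ : p ∣ α.norm := by
    rw [← Ideal.mem_span_singleton, ← hcomap, Ideal.mem_comap, algebraMap_norm_eq_mul_star]
    exact Ideal.mul_mem_right _ _ (hα ▸ Ideal.mem_span_singleton_self α)
  obtain ⟨γ, hγ⟩ : α ∣ algebraMap R _ p := by rwa [← Ideal.mem_span_singleton, ← hα]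
  have hpm : p = m * γ.norm := by
    apply mul_left_cancel₀ hp.ne_zero
    have := congrArg norm hγ
    rw [norm_algebraMap, map_mul, hm] at this
    linear_combination this
  rcases hp.isUnit_or_isUnit hpm with hmu | hγu
  · exact ⟨α, hm ▸ associated_mul_unit_right p m hmu⟩
  · have h𝔭p : 𝔭 = Ideal.span {algebraMap R _ p} := by
      rw [hα, hγ, Ideal.span_singleton_mul_right_unit (isUnit_iff_norm_isUnit.mpr hγu)]
    exact (hne (hmax.eq_of_le h𝔭'.ne_top (h𝔭p.trans hprod ▸ Ideal.mul_le_right))).elim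

theorem splitsWithPrincipalFactor_iff [IsDomain R] [IsPrincipalIdealRing R]
    (hp : Irreducible p) (hpd : ¬ p ∣ d) (hp2 : ¬ p ∣ 2) :
    SplitsWithPrincipalFactor (QuadraticAlgebra R d 0) p ↔
      ∃ z : QuadraticAlgebra R d 0, Associated p z.norm :=
  ⟨exists_associated_norm_of_splitsWithPrincipalFactor hp,
    fun ⟨_, hz⟩ ↦ splitsWithPrincipalFactor_of_associated_norm hp hpd hp2 hz⟩

theorem exists_associated_norm_iff :
    (∃ z : QuadraticAlgebra R d 0, Associated p z.norm) ↔
      ∃ x y : R, Associated p (x ^ 2 - d * y ^ 2) :=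
  ⟨fun ⟨⟨x, y⟩, h⟩ ↦ ⟨x, y, norm_mk_of_zero x y ▸ h⟩,
    fun ⟨x, y, h⟩ ↦ ⟨⟨x, y⟩, (norm_mk_of_zero x y).symm ▸ h⟩⟩

end QuadraticAlgebra

section IntegralClosure

variable {R F K : Type*} [CommRing R] [Field F] [Algebra R F] [IsFractionRing R F]
  [Field K] [Algebra F K] [Algebra R K] [IsScalarTower R F K] {d : R}

theorem not_isSquare_algebraMap_of_squarefree [IsIntegrallyClosed R] (hsf : Squarefree d)
    (hd : ¬ IsUnit d) : ¬ IsSquare (algebraMap R F d) := by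
  rintro ⟨c, hc⟩
  have hint : IsIntegral R c := .of_pow two_pos (by rw [sq, ← hc]; exact isIntegral_algebraMap)
  obtain ⟨e, rfl⟩ := IsIntegrallyClosed.isIntegral_iff.mp hint
  rw [← map_mul] at hc
  obtain rfl := IsFractionRing.injective R F hc
  exact hd ((hsf e dvd_rfl).mul (hsf e dvd_rfl))

theorem exists_algebraMap_eq_of_mul_sq [IsDomain R] [IsIntegrallyClosed R]
    [DecompositionMonoid R] (hsf : Squarefree d) {b : F} {w : R}
    (h : algebraMap R F d * b ^ 2 = algebraMap R F w) :
    ∃ y : R, algebraMap R F y = b := by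
  have hint : IsIntegral R (algebraMap R F d * b) := by
    refine .of_pow two_pos ?_
    rw [mul_pow, sq (algebraMap R F d), mul_assoc, h, ← map_mul]
    exact isIntegral_algebraMap
  obtain ⟨c, hc⟩ := IsIntegrallyClosed.isIntegral_iff.mp hint
  have hcw : c ^ 2 = d * w := IsFractionRing.injective R F (by
    simp only [map_pow, map_mul, hc, ← h]; ring)
  obtain ⟨y, rfl⟩ := (hsf.dvd_pow_iff_dvd two_ne_zero).mp (Dvd.intro _ hcw.symm)
  exact ⟨y, mul_left_cancel₀ ((map_ne_zero_iff _ (IsFractionRing.injective R F)).mpr hsf.ne_zero)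
    ((map_mul _ _ _).symm.trans hc)⟩

variable {s : K}

theorem eq_zero_of_algebraMap_add_algebraMap_mul_eq_zero (hs : s ∉ Set.range (algebraMap F K))
    {a b : F} (h : algebraMap F K a + algebraMap F K b * s = 0) : a = 0 ∧ b = 0 := by
  obtain rfl : b = 0 := by
    by_contra hb
    refine hs ⟨-a / b, ?_⟩
    rw [map_div₀, map_neg, div_eq_iff ((_root_.map_ne_zero _).mpr hb)]
    linear_combination -h
  simpa using h

theorem exists_algebraMap_eq_of_isIntegral [IsDomain R] [IsIntegrallyClosed R]
    [DecompositionMonoid R] (hsf : Squarefree d) (h2 : IsUnit (2 : R))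
    (hs : s ∉ Set.range (algebraMap F K)) (hs2 : s ^ 2 = algebraMap R K d) {a b : F}
    (hz : IsIntegral R (algebraMap F K a + algebraMap F K b * s)) :
    ∃ x y : R, algebraMap R F x = a ∧ algebraMap R F y = b := by
  by_cases hb : b = 0
  · subst hb
    rw [map_zero, zero_mul, add_zero, isIntegral_algebraMap_iff (algebraMap F K).injective] at hz
    obtain ⟨x, rfl⟩ := IsIntegrallyClosed.isIntegral_iff.mp hz
    exact ⟨x, 0, rfl, map_zero _⟩
  set z := algebraMap F K a + algebraMap F K b * s with hz_def
  set P : F[X] := X ^ 2 - C (2 * a) * X + C (a ^ 2 - algebraMap R F d * b ^ 2) with hP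
  have hPmonic : P.Monic := by rw [hP]; monicity!
  have hPdeg : P.natDegree = 2 := by rw [hP]; compute_degree!
  have hPz : aeval z P = 0 := by
    simp only [hP, hz_def, map_mul, map_ofNat, map_sub, map_pow, map_add, aeval_X,
      aeval_C, ← IsScalarTower.algebraMap_apply, ← hs2]
    ring
  have hz1 : (minpoly F z).natDegree ≠ 1 := by
    rw [Ne, minpoly.natDegree_eq_one_iff]
    rintro ⟨c, hc⟩
    refine hs ⟨(c - a) / b, ?_⟩
    rw [map_div₀, map_sub, hc, div_eq_iff ((_root_.map_ne_zero _).mpr hb), hz_def]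
    ring
  have hzF : IsIntegral F z := hz.tower_top
  have hmin : P = minpoly F z :=
    eq_of_monic_of_dvd_of_natDegree_le (minpoly.monic hzF) hPmonic
      (minpoly.dvd F z hPz) (by have := minpoly.natDegree_pos hzF; omega)
  have hcoeff (n : ℕ) : ∃ r : R, algebraMap R F r = P.coeff n :=
    ⟨(minpoly R z).coeff n, by
      rw [← coeff_map, ← minpoly.isIntegrallyClosed_eq_field_fractions' F hz, ← hmin]⟩
  obtain ⟨t, ht⟩ := hcoeff 1
  obtain ⟨n, hn⟩ := hcoeff 0
  simp only [hP, coeff_add, coeff_sub, coeff_X_pow, OfNat.one_ne_ofNat, ↓reduceIte, coeff_mul_X,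
    coeff_C_zero, zero_sub, coeff_C_succ, add_zero] at ht
  simp only [hP, coeff_add, coeff_sub, coeff_X_pow, OfNat.zero_ne_ofNat, ↓reduceIte,
    mul_coeff_zero, coeff_C, coeff_X, one_ne_zero, mul_zero, sub_self, zero_add] at hn
  have hx : algebraMap R F (-(↑h2.unit⁻¹ * t)) = a := by
    have : algebraMap R F ↑h2.unit⁻¹ * 2 = 1 := by
      rw [← map_ofNat (algebraMap R F) 2, ← map_mul, h2.val_inv_mul, map_one]
    rw [map_neg, map_mul, ht]
    linear_combination a * this
  obtain ⟨y, hy⟩ :=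
    exists_algebraMap_eq_of_mul_sq hsf (b := b) (w := (-(↑h2.unit⁻¹ * t)) ^ 2 - n)
      (by rw [map_sub, map_pow, hx, hn]; ring)
  exact ⟨_, y, hx, hy⟩

noncomputable def QuadraticAlgebra.equivIntegralClosure [IsDomain R] [IsIntegrallyClosed R]
    [DecompositionMonoid R] (hsf : Squarefree d) (h2 : IsUnit (2 : R))
    (hs : s ∉ Set.range (algebraMap F K)) (hs2 : s ^ 2 = algebraMap R K d)
    (hgen : ∀ z : K, ∃ a b : F, z = algebraMap F K a + algebraMap F K b * s) :
    QuadraticAlgebra R d 0 ≃ₐ[R] integralClosure R K := by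
  let u : integralClosure R K := ⟨s, .of_pow two_pos (hs2 ▸ isIntegral_algebraMap)⟩
  let f := lift (R := R) (a := d) (b := 0)
    ⟨u, Subtype.ext (by simp [u, ← sq, hs2, Algebra.smul_def])⟩
  have hf (z : QuadraticAlgebra R d 0) : (f z : K) =
      algebraMap F K (algebraMap R F z.re) + algebraMap F K (algebraMap R F z.im) * s := by
    simp only [f, u, lift_apply_apply, Algebra.smul_def, mul_one, AddMemClass.coe_add,
      SubalgebraClass.coe_algebraMap, MulMemClass.coe_mul, ← IsScalarTower.algebraMap_apply]
  refine AlgEquiv.ofBijective f ⟨(injective_iff_map_eq_zero f).mpr fun z hz ↦ ?_, fun w ↦ ?_⟩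
  · have := eq_zero_of_algebraMap_add_algebraMap_mul_eq_zero hs
      ((hf z).symm.trans (congrArg Subtype.val hz))
    simp only [FaithfulSMul.algebraMap_eq_zero_iff] at this
    exact QuadraticAlgebra.ext this.1 this.2
  · obtain ⟨a, b, hab⟩ := hgen w
    obtain ⟨x, y, rfl, rfl⟩ := exists_algebraMap_eq_of_isIntegral hsf h2 hs hs2 (hab ▸ w.2)
    exact ⟨⟨x, y⟩, Subtype.ext ((hf _).trans hab.symm)⟩

end IntegralClosure

/-- Let `q` be a power of an odd prime, let `d ∈ 𝔽_q[T]` be square-free and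
non-constant, and let `p ∈ 𝔽_q[T]` be an irreducible polynomial not dividing
`d`.  Then the ideal `(p)` of `A = 𝔽_q[T]` is generated by an element of the
form `x² - d·y²` with `x, y ∈ A` if and only if the ideal `p·B_K` of `B_K`
(the integral closure of `A` in `K = 𝔽_q(T)(√d)`) factors as a product `𝔭·𝔭'`
of two distinct prime ideals of `B_K`, with `𝔭` a principal ideal. -/
theorem stmt_2 (q : ℕ) (Fq : Type) [Field Fq] [Fintype Fq]
    (hq : Fintype.card Fq = q) (hodd : Odd q)
    (d : Polynomial Fq) (hsf : Squarefree d) (hnc : 0 < d.natDegree)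
    (K : Type) [Field K] [Algebra (RatFunc Fq) K]
    [Algebra (Polynomial Fq) K] [IsScalarTower (Polynomial Fq) (RatFunc Fq) K]
    (sqd : K) (hsqd : sqd ^ 2 = algebraMap (Polynomial Fq) K d)
    (hgen : ∀ z : K, ∃ a b : RatFunc Fq,
      z = algebraMap (RatFunc Fq) K a + algebraMap (RatFunc Fq) K b * sqd)
    (p : Polynomial Fq) (hirr : Irreducible p) (hpd : ¬ p ∣ d) :
    (∃ x y : Polynomial Fq, Ideal.span {p} = Ideal.span {x ^ 2 - d * y ^ 2}) ↔
      (∃ 𝔭 𝔭' : Ideal ↥(integralClosure (Polynomial Fq) K),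
        𝔭.IsPrime ∧ 𝔭'.IsPrime ∧ 𝔭 ≠ 𝔭' ∧
        Ideal.span {algebraMap (Polynomial Fq) ↥(integralClosure (Polynomial Fq) K) p} =
          𝔭 * 𝔭' ∧
        Submodule.IsPrincipal 𝔭) := by
  have h2 : IsUnit (2 : Polynomial Fq) := by
    have hchar : ringChar Fq ≠ 2 := by
      rw [Ne, FiniteField.even_card_iff_char_two, hq, ← Nat.even_iff, Nat.not_even_iff_odd]
      exact hodd
    rw [← map_ofNat (C : Fq →+* Polynomial Fq) 2, isUnit_C]
    exact isUnit_iff_ne_zero.mpr (Ring.two_ne_zero hchar)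
  have hs : sqd ∉ Set.range (algebraMap (RatFunc Fq) K) := by
    rintro ⟨c, rfl⟩
    refine not_isSquare_algebraMap_of_squarefree hsf
      (fun h ↦ hnc.ne' (natDegree_eq_zero_of_isUnit h))
      ⟨c, (algebraMap (RatFunc Fq) K).injective ?_⟩
    rw [map_mul, ← sq, hsqd, IsScalarTower.algebraMap_apply (Polynomial Fq) (RatFunc Fq) K]
  have hp2 : ¬ p ∣ 2 := fun h ↦ hirr.not_isUnit (isUnit_of_dvd_unit h h2)
  calc (∃ x y : Polynomial Fq, Ideal.span {p} = Ideal.span {x ^ 2 - d * y ^ 2})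
      ↔ ∃ x y : Polynomial Fq, Associated p (x ^ 2 - d * y ^ 2) := by
        simp only [Ideal.span_singleton_eq_span_singleton]
    _ ↔ ∃ z : QuadraticAlgebra (Polynomial Fq) d 0, Associated p z.norm :=
        QuadraticAlgebra.exists_associated_norm_iff.symm
    _ ↔ SplitsWithPrincipalFactor (QuadraticAlgebra (Polynomial Fq) d 0) p :=
        (QuadraticAlgebra.splitsWithPrincipalFactor_iff hirr hpd hp2).symm
    _ ↔ SplitsWithPrincipalFactor (integralClosure (Polynomial Fq) K) p :=
        (QuadraticAlgebra.equivIntegralClosure hsf h2 hs hsqd hgen).splitsWithPrincipalFactor_iff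
end

section
/- Let q be a power of an odd prime, let d ∈ 𝔽_q[T] be square-free and non-constant, and let p ∈ 𝔽_q[T] be a monic irreducible polynomial dividing d. Then in B_K the ideal generated by p satisfies p·B_K = 𝔭², where 𝔭 is the ideal of B_K generated by p and √d, and 𝔭 is a prime ideal of B_K. -/
open Polynomial

/-!
As `2` is a unit of `A = 𝔽_q[T]` and `d` is square-free, `B_K = A[√d]`: if `z = a + b√d` with
`b ≠ 0` is integral, its minimal polynomial over `F` is `X² - 2aX + (a² - b²d)`, whose
coefficients lie in the integrally closed ring `A`; so `a ∈ A`, then `b²d ∈ A`, and `b ∈ A` because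
`(bd)² = (b²d)·d` forces `bd ∈ A` and `d ∣ (bd)²`, hence `d ∣ bd`.

Write `d = p e`. Square-freeness gives `p ∤ e`, so `u p + v e = 1`, and then
`p = u p² + v √d²` lies in `(p, √d)² = (p², p√d, p e)`, which is contained in `(p)`.
Modulo `𝔭 = (p, √d)` every `a + b√d` is congruent to `a ∈ A`, so `B_K/𝔭` is a quotient of the field
`A/(p)`; it is nonzero since `𝔭² = (p)` and `p` is not a unit in the integral extension `B_K`.
-/

theorem Squarefree.not_isSquare {R : Type*} [CommMonoid R] {d : R} (hsf : Squarefree d)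
    (hd : ¬IsUnit d) : ¬IsSquare d := by
  rintro ⟨r, rfl⟩
  exact hd ((hsf r dvd_rfl).mul (hsf r dvd_rfl))

theorem Ideal.span_singleton_eq_span_pair_sq {R : Type*} [CommRing R] {p s e u v : R}
    (hs : s ^ 2 = p * e) (huv : u * p + v * e = 1) :
    Ideal.span {p} = Ideal.span {p, s} ^ 2 := by
  rw [sq, Ideal.span_pair_mul_span_pair]
  apply le_antisymm
  · rw [Ideal.span_singleton_le_iff_mem]
    have hp : u * (p * p) + v * (s * s) = p := by linear_combination p * huv + v * hs
    have hmem : u * (p * p) + v * (s * s) ∈ Ideal.span {p * p, p * s, s * p, s * s} := by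
      apply add_mem <;> apply Ideal.mul_mem_left <;> apply Ideal.subset_span <;> simp
    rwa [hp] at hmem
  · rw [Ideal.span_le]
    rintro x (rfl | rfl | rfl | rfl) <;> rw [SetLike.mem_coe, Ideal.mem_span_singleton]
    · exact dvd_mul_right p p
    · exact dvd_mul_right p s
    · exact dvd_mul_left p s
    · exact ⟨e, by rw [← sq, hs]⟩

theorem Ideal.span_algebraMap_eq_span_pair_sq {A R : Type*} [CommRing A] [CommRing R]
    [Algebra A R] {d p : A} (hd : Squarefree d) (hp : (Ideal.span {p}).IsMaximal) (hpd : p ∣ d)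
    {s : R} (hs : s ^ 2 = algebraMap A R d) :
    Ideal.span {algebraMap A R p} = Ideal.span {algebraMap A R p, s} ^ 2 := by
  obtain ⟨e, rfl⟩ := hpd
  have he : e ∉ Ideal.span {p} := by
    rw [Ideal.mem_span_singleton]
    rintro ⟨c, rfl⟩
    exact hp.ne_top (Ideal.span_singleton_eq_top.mpr (hd p ⟨c, by ring⟩))
  obtain ⟨v, i, hi, hvi⟩ := hp.exists_inv he
  obtain ⟨u, rfl⟩ := Ideal.mem_span_singleton'.mp hi
  refine Ideal.span_singleton_eq_span_pair_sq (e := algebraMap A R e) (u := algebraMap A R u)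
    (v := algebraMap A R v) (by rw [hs, map_mul]) ?_
  rw [← map_mul, ← map_mul, ← map_add, add_comm, hvi, map_one]

theorem Ideal.isMaximal_of_surjective_quotient_comp {R S : Type*} [CommRing R] [CommRing S]
    (f : R →+* S) {I : Ideal S} (hI : I ≠ ⊤) {m : Ideal R} [m.IsMaximal] (hm : m.map f ≤ I)
    (hsurj : Function.Surjective ((Ideal.Quotient.mk I).comp f)) : I.IsMaximal := by
  have : Nontrivial (S ⧸ I) := Ideal.Quotient.nontrivial_iff.mpr hI
  have hbot : m.map ((Ideal.Quotient.mk I).comp f) = ⊥ := by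
    rw [← Ideal.map_map, Ideal.map_eq_bot_iff_le_ker, Ideal.mk_ker]
    exact hm
  have : (⊥ : Ideal (S ⧸ I)).IsMaximal :=
    hbot ▸ (Ideal.map_eq_top_or_isMaximal_of_surjective _ hsurj ‹_›).resolve_left
      (hbot ▸ bot_ne_top)
  rw [← Ideal.mk_ker (I := I)]
  exact Ideal.comap_isMaximal_of_surjective _ Ideal.Quotient.mk_surjective

theorem Polynomial.isUnit_two_of_odd_card {Fq : Type*} [Field Fq] [Fintype Fq]
    (hodd : Odd (Fintype.card Fq)) : IsUnit (2 : Fq[X]) := by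
  have hchar : ringChar Fq ≠ 2 := fun h ↦ by
    have := FiniteField.even_card_of_char_two h
    rw [Nat.odd_iff] at hodd
    omega
  rw [← C_ofNat, isUnit_C]
  exact (Ring.two_ne_zero hchar).isUnit

theorem mem_range_of_two_mul_mem_range {A F : Type*} [CommRing A] [CommRing F] [Algebra A F]
    (h2 : IsUnit (2 : A)) {a : F}
    (ha : 2 * a ∈ (algebraMap A F).range) : a ∈ (algebraMap A F).range := by
  obtain ⟨t, ht⟩ := ha
  refine ⟨↑h2.unit⁻¹ * t, ?_⟩
  have h2F : algebraMap A F ↑h2.unit⁻¹ * 2 = 1 := by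
    rw [← map_ofNat (algebraMap A F) 2, ← map_mul, h2.val_inv_mul, map_one]
  rw [map_mul, ht]
  linear_combination a * h2F

section IntegrallyClosed

variable {A F K : Type*} [CommRing A] [IsIntegrallyClosed A] [Field F] [Algebra A F]
  [IsFractionRing A F] [Field K] [Algebra F K] [Algebra A K] [IsScalarTower A F K]

theorem not_isSquare_algebraMap_of_not_isSquare {d : A} (hd : ¬IsSquare d) :
    ¬IsSquare (algebraMap A F d) := by
  rintro ⟨r, hr⟩
  obtain ⟨y, rfl⟩ := IsIntegrallyClosed.exists_algebraMap_eq_of_isIntegral_pow (R := A) two_pos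
    (show IsIntegral A (r ^ 2) by rw [sq, ← hr]; exact isIntegral_algebraMap)
  exact hd ⟨y, IsFractionRing.injective A F (by rw [hr, map_mul])⟩

theorem sqrt_notMem_range_of_not_isSquare {d : A} (hd : ¬IsSquare d) {s : K}
    (hs : s ^ 2 = algebraMap A K d) : s ∉ (algebraMap F K).range := by
  rintro ⟨r, rfl⟩
  refine not_isSquare_algebraMap_of_not_isSquare (F := F) hd ⟨r, (algebraMap F K).injective ?_⟩
  rw [map_mul, ← sq, hs, IsScalarTower.algebraMap_apply A F K]

theorem mem_range_of_sq_mul_mem_range [IsDomain A] [DecompositionMonoid A] {d : A}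
    (hd : Squarefree d) {b : F} (hb : b ^ 2 * algebraMap A F d ∈ (algebraMap A F).range) :
    b ∈ (algebraMap A F).range := by
  obtain ⟨c, hc⟩ := hb
  have hbd : IsIntegral A ((b * algebraMap A F d) ^ 2) := by
    rw [mul_pow, sq (algebraMap A F d), ← mul_assoc, ← hc, ← map_mul]
    exact isIntegral_algebraMap
  obtain ⟨m, hm⟩ := IsIntegrallyClosed.exists_algebraMap_eq_of_isIntegral_pow two_pos hbd
  obtain ⟨b', rfl⟩ : d ∣ m := by
    refine (hd.dvd_pow_iff_dvd two_ne_zero).mp ⟨c, IsFractionRing.injective A F ?_⟩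
    rw [map_pow, hm, map_mul, hc]
    ring
  refine ⟨b', mul_right_cancel₀ (IsFractionRing.to_map_ne_zero_of_mem_nonZeroDivisors
    (mem_nonZeroDivisors_of_ne_zero hd.ne_zero)) ?_⟩
  rw [← map_mul, mul_comm, hm]

theorem IsIntegral.coeff_mem_range_of_natDegree_le [IsDomain A] {x : K} (hx : IsIntegral A x)
    {g : F[X]} (hg : g.Monic) (hgx : aeval x g = 0)
    (hdeg : g.natDegree ≤ (minpoly F x).natDegree) (n : ℕ) :
    g.coeff n ∈ (algebraMap A F).range := by
  have hmin : g = minpoly F x :=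
    eq_of_monic_of_dvd_of_natDegree_le (minpoly.monic hx.tower_top) hg (minpoly.dvd F x hgx) hdeg
  rw [hmin, minpoly.isIntegrallyClosed_eq_field_fractions' F hx, coeff_map]
  exact ⟨_, rfl⟩

theorem IsIntegral.two_mul_mem_range_and_sq_sub_mem_range [IsDomain A] {d : A} {s : K}
    (hs : s ^ 2 = algebraMap A K d) (hsF : s ∉ (algebraMap F K).range) {a b : F} (hb : b ≠ 0)
    (hz : IsIntegral A (algebraMap F K a + algebraMap F K b * s)) :
    2 * a ∈ (algebraMap A F).range ∧
      a ^ 2 - b ^ 2 * algebraMap A F d ∈ (algebraMap A F).range := by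
  have hzF : algebraMap F K a + algebraMap F K b * s ∉ (algebraMap F K).range := by
    rintro ⟨w, hw⟩
    refine hsF ⟨(w - a) / b, ?_⟩
    have hbK : algebraMap F K b ≠ 0 := by simpa using hb
    rw [map_div₀, map_sub, hw]
    field_simp
    ring
  set g : F[X] := X ^ 2 - C (2 * a) * X + C (a ^ 2 - b ^ 2 * algebraMap A F d)
  have hg : g.Monic := by unfold g; monicity!
  have hgz : aeval (algebraMap F K a + algebraMap F K b * s) g = 0 := by
    simp only [g, map_add, map_sub, map_mul, map_pow, aeval_X, aeval_C, map_ofNat,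
      ← IsScalarTower.algebraMap_apply, ← hs]
    ring
  have hdeg : g.natDegree ≤ (minpoly F (algebraMap F K a + algebraMap F K b * s)).natDegree := by
    rw [show g.natDegree = 2 by unfold g; compute_degree!]
    exact (minpoly.two_le_natDegree_iff hz.tower_top).mpr hzF
  constructor
  · rw [← neg_mem_iff]
    convert hz.coeff_mem_range_of_natDegree_le hg hgz hdeg 1 using 1
    simp only [g, coeff_add, coeff_sub, coeff_C_mul, coeff_X_pow, coeff_X, coeff_C]
    norm_num
  · convert hz.coeff_mem_range_of_natDegree_le hg hgz hdeg 0 using 1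
    simp only [g, coeff_add, coeff_sub, coeff_C_mul, coeff_X_pow, coeff_X, coeff_C]
    norm_num

theorem exists_eq_algebraMap_add_algebraMap_mul_of_isIntegral [IsDomain A] [DecompositionMonoid A]
    (h2 : IsUnit (2 : A)) {d : A} (hd : Squarefree d) {s : K} (hs : s ^ 2 = algebraMap A K d)
    (hsF : s ∉ (algebraMap F K).range)
    (hgen : ∀ z : K, ∃ a b : F, z = algebraMap F K a + algebraMap F K b * s)
    {z : K} (hz : IsIntegral A z) : ∃ a b : A, z = algebraMap A K a + algebraMap A K b * s := by
  obtain ⟨a, b, rfl⟩ := hgen z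
  suffices a ∈ (algebraMap A F).range ∧ b ∈ (algebraMap A F).range by
    obtain ⟨⟨a', rfl⟩, ⟨b', rfl⟩⟩ := this
    exact ⟨a', b', by simp only [← IsScalarTower.algebraMap_apply]⟩
  rcases eq_or_ne b 0 with rfl | hb
  · rw [map_zero, zero_mul, add_zero, isIntegral_algebraMap_iff (algebraMap F K).injective] at hz
    exact ⟨IsIntegrallyClosed.isIntegral_iff.mp hz, zero_mem _⟩
  obtain ⟨htrace, hnorm⟩ := hz.two_mul_mem_range_and_sq_sub_mem_range hs hsF hb
  have ha := mem_range_of_two_mul_mem_range h2 htrace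
  refine ⟨ha, mem_range_of_sq_mul_mem_range hd ?_⟩
  rw [show b ^ 2 * algebraMap A F d = a ^ 2 - (a ^ 2 - b ^ 2 * algebraMap A F d) by ring]
  exact sub_mem (pow_mem ha 2) hnorm

theorem isMaximal_span_pair_integralClosure [IsDomain A] [DecompositionMonoid A]
    (h2 : IsUnit (2 : A)) {d : A} (hd : Squarefree d) {s : integralClosure A K}
    (hs : s ^ 2 = algebraMap A _ d) (hsF : (s : K) ∉ (algebraMap F K).range)
    (hgen : ∀ z : K, ∃ a b : F, z = algebraMap F K a + algebraMap F K b * s)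
    {p : A} (hp : (Ideal.span {p}).IsMaximal) (hpd : p ∣ d) :
    (Ideal.span {algebraMap A (integralClosure A K) p, s}).IsMaximal := by
  have hinj : Function.Injective (algebraMap A (integralClosure A K)) := by
    refine .of_comp (f := Subtype.val) ?_
    change Function.Injective (algebraMap A K)
    rw [IsScalarTower.algebraMap_eq A F K]
    exact (algebraMap F K).injective.comp (IsFractionRing.injective A F)
  have hP : Ideal.span {algebraMap A (integralClosure A K) p, s} ≠ ⊤ := by
    intro htop
    refine hp.ne_top ?_
    rw [← Ideal.map_eq_top_iff _ hinj (algebraMap_isIntegral_iff.mpr inferInstance),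
      Ideal.map_span, Set.image_singleton, Ideal.span_algebraMap_eq_span_pair_sq hd hp hpd hs,
      htop, Ideal.top_pow]
  refine Ideal.isMaximal_of_surjective_quotient_comp (algebraMap A _) hP (m := Ideal.span {p}) ?_ ?_
  · rw [Ideal.map_span, Set.image_singleton, Ideal.span_le, Set.singleton_subset_iff]
    exact Ideal.subset_span (Set.mem_insert _ _)
  · intro x
    obtain ⟨z, rfl⟩ := Ideal.Quotient.mk_surjective x
    have hs' : (s : K) ^ 2 = algebraMap A K d := by simpa using congrArg Subtype.val hs
    obtain ⟨a, b, hab⟩ :=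
      exists_eq_algebraMap_add_algebraMap_mul_of_isIntegral h2 hd hs' hsF hgen z.2
    refine ⟨a, ?_⟩
    rw [RingHom.comp_apply, Ideal.Quotient.mk_eq_mk_iff_sub_mem]
    have hz : algebraMap A _ a - z = -(algebraMap A _ b * s) := Subtype.ext (by simp [hab])
    rw [hz]
    exact neg_mem <| Ideal.mul_mem_left _ _ (Ideal.subset_span (Set.mem_insert_of_mem _ rfl))

end IntegrallyClosed

/-- Let `q` be a power of an odd prime, let `d ∈ 𝔽_q[T]` be square-free and
non-constant, and let `p ∈ 𝔽_q[T]` be a monic irreducible polynomial dividing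
`d`.  Then in `B_K` (the integral closure of `A = 𝔽_q[T]` in `K = 𝔽_q(T)(√d)`)
one has `p·B_K = 𝔭²`, where `𝔭` is the ideal of `B_K` generated by `p` and `√d`,
and `𝔭` is a prime ideal of `B_K`. -/
theorem stmt_4 (q : ℕ) (Fq : Type) [Field Fq] [Fintype Fq]
    (hq : Fintype.card Fq = q) (hodd : Odd q)
    (d : Polynomial Fq) (hsf : Squarefree d) (hnc : 0 < d.natDegree)
    (K : Type) [Field K] [Algebra (RatFunc Fq) K]
    [Algebra (Polynomial Fq) K] [IsScalarTower (Polynomial Fq) (RatFunc Fq) K]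
    (sqd : K) (hsqd : sqd ^ 2 = algebraMap (Polynomial Fq) K d)
    (hgen : ∀ z : K, ∃ a b : RatFunc Fq,
      z = algebraMap (RatFunc Fq) K a + algebraMap (RatFunc Fq) K b * sqd)
    (p : Polynomial Fq) (hirr : Irreducible p) (hpd : p ∣ d) :
    Ideal.span {algebraMap (Polynomial Fq) ↥(integralClosure (Polynomial Fq) K) p} =
      (Ideal.span {algebraMap (Polynomial Fq) ↥(integralClosure (Polynomial Fq) K) p,
        (⟨sqd, ⟨X ^ 2 - C d, monic_X_pow_sub_C d two_ne_zero, by simp [hsqd]⟩⟩ :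
          ↥(integralClosure (Polynomial Fq) K))}) ^ 2 ∧
    (Ideal.span {algebraMap (Polynomial Fq) ↥(integralClosure (Polynomial Fq) K) p,
        (⟨sqd, ⟨X ^ 2 - C d, monic_X_pow_sub_C d two_ne_zero, by simp [hsqd]⟩⟩ :
          ↥(integralClosure (Polynomial Fq) K))}).IsPrime := by
  have hp : (Ideal.span {p}).IsMaximal := PrincipalIdealRing.isMaximal_of_irreducible hirr
  have hs : (⟨sqd, ⟨X ^ 2 - C d, monic_X_pow_sub_C d two_ne_zero, by simp [hsqd]⟩⟩ :
      ↥(integralClosure (Polynomial Fq) K)) ^ 2 = algebraMap _ _ d := Subtype.ext hsqd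
  have hsF : sqd ∉ (algebraMap (RatFunc Fq) K).range :=
    sqrt_notMem_range_of_not_isSquare (hsf.not_isSquare (not_isUnit_of_natDegree_pos d hnc)) hsqd
  exact ⟨Ideal.span_algebraMap_eq_span_pair_sq hsf hp hpd hs,
    (isMaximal_span_pair_integralClosure (isUnit_two_of_odd_card (hq ▸ hodd)) hsf hs hsF hgen
      hp hpd).isPrime⟩
end
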